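/- arXiv:1505.07681 — 4 statements merged into one kernel-verified Lean document; each statement's English description precedes it below -/
import Mathlib

section
/- Fix an integer j ≥ 1 and n ≥ j + 2 with n ≥ 4. For a word s of length n-3 over {0,1} with no triple starting at any position strictly less than j-2 (when j ≥ 2), write s = w₁ q w₂ where w₁ has length j-2, q is a single letter, and w₂ is the remainder; define φ(s) = w₁ q q̄ q̄ q̄ w₂, where q̄ denotes the opposite letter. Then φ is an injection from {words of length n-3 with no triple starting before position j-2} into {words of length n whose first triple starts exactly at position j}, and moreover φ is a bijection onto that set when j ≥ 2. -/
/-!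
Write `s = w₁ q w₂` with `|w₁ q| = i + 1`. In `w₁ q q̄ q̄ q̄ w₂` a triple starting before the block
`q̄ q̄ q̄` either lies inside `w₁ q`, hence is a triple of `s`, or contains the adjacent letters
`q q̄`, which is impossible. Conversely, if the first triple of `t` starts at `i + 1`, then
`t i ≠ t (i + 1)`, so deleting that triple gives a preimage whose letter at `i` is the opposite
of the deleted one.
-/

/-- `w` (a word over the two-letter alphabet, as a list of booleans) has three consecutive
equal letters starting at (0-indexed) position `k`. -/
def TripleAtL (w : List Bool) (k : ℕ) : Prop :=
  k + 2 < w.length ∧ w.getD k false = w.getD (k + 1) false ∧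
    w.getD (k + 1) false = w.getD (k + 2) false

namespace List

variable {α : Type*}

theorem getD_take_append_of_lt {t : List α} (r : List α) {m k : ℕ} (d : α) (hk : k < m)
    (hm : m ≤ t.length) : (t.take m ++ r).getD k d = t.getD k d := by
  rw [getD_append _ _ _ _ (by simp; omega)]
  simp [getD_eq_getElem?_getD, hk]

theorem take_append_drop_add_length {s : List α} (l : List α) {i : ℕ} (hi : i ≤ s.length) :
    (s.take i ++ l ++ s.drop i).take i ++ (s.take i ++ l ++ s.drop i).drop (i + l.length) = s := by
  have hlen : (s.take i).length = i := by simp; omega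
  rw [append_assoc, take_left' hlen, ← append_assoc, drop_left' (by simp [hlen]),
    take_append_drop]

end List

theorem tripleAtL_take_append_iff {t : List Bool} (r : List Bool) {k m : ℕ} (hk : k + 3 ≤ m)
    (hm : m ≤ t.length) : TripleAtL (t.take m ++ r) k ↔ TripleAtL t k := by
  have hget (p : ℕ) (hp : p ≤ k + 2) : (t.take m ++ r).getD p false = t.getD p false :=
    List.getD_take_append_of_lt r false (by omega) hm
  have hlen : k + 2 < (t.take m ++ r).length := by simp; omega
  have hlen' : k + 2 < t.length := by omega
  simp only [TripleAtL, hget k (by omega), hget (k + 1) (by omega), hget (k + 2) le_rfl,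
    hlen, hlen', true_and]

theorem TripleAtL.eq_take_append_append_drop {t : List Bool} {i : ℕ} (h : TripleAtL t i) :
    t = t.take i ++ [t.getD i false, t.getD i false, t.getD i false] ++ t.drop (i + 3) := by
  obtain ⟨hlen, h₁, h₂⟩ := h
  conv_lhs => rw [← List.take_append_drop i t, List.drop_eq_getElem_cons (by omega),
    List.drop_eq_getElem_cons (by omega), List.drop_eq_getElem_cons (by omega)]
  simp only [← List.getD_eq_getElem t false, ← h₁, ← h₂, List.append_assoc, List.cons_append,
    List.nil_append]

def insertOppositeTriple (i : ℕ) (s : List Bool) : List Bool :=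
  s.take (i + 1) ++ [!s.getD i false, !s.getD i false, !s.getD i false] ++ s.drop (i + 1)

section insertOppositeTriple

variable {i : ℕ} {s : List Bool}

theorem length_insertOppositeTriple (hi : i < s.length) :
    (insertOppositeTriple i s).length = s.length + 3 := by
  simp [insertOppositeTriple]; omega

theorem getD_insertOppositeTriple_of_le {k : ℕ} (hk : k ≤ i) (hi : i < s.length) :
    (insertOppositeTriple i s).getD k false = s.getD k false := by
  rw [insertOppositeTriple, List.append_assoc]
  exact List.getD_take_append_of_lt _ _ (by omega) hi

theorem getD_insertOppositeTriple_of_lt {k : ℕ} (hik : i < k) (hk : k < i + 4)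
    (hi : i < s.length) : (insertOppositeTriple i s).getD k false = !s.getD i false := by
  have hlen : (s.take (i + 1)).length = i + 1 := by simp; omega
  rw [insertOppositeTriple, List.append_assoc, List.getD_append_right _ _ _ _ (by omega), hlen,
    List.getD_append _ _ _ _ (by simp; omega)]
  obtain h | h | h : k - (i + 1) = 0 ∨ k - (i + 1) = 1 ∨ k - (i + 1) = 2 := by omega
  all_goals rw [h]; rfl

theorem tripleAtL_insertOppositeTriple (hi : i < s.length) :
    TripleAtL (insertOppositeTriple i s) (i + 1) := by
  refine ⟨by rw [length_insertOppositeTriple hi]; omega, ?_⟩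
  have hget (k : ℕ) (hik : i < k) (hk : k < i + 4) :=
    getD_insertOppositeTriple_of_lt hik hk hi
  rw [hget (i + 1) (by omega) (by omega), hget (i + 1 + 1) (by omega) (by omega),
    hget (i + 1 + 2) (by omega) (by omega)]
  exact ⟨rfl, rfl⟩

theorem not_tripleAtL_insertOppositeTriple (hs : ∀ k, k + 2 ≤ i → ¬TripleAtL s k)
    (hi : i < s.length) : ∀ k < i + 1, ¬TripleAtL (insertOppositeTriple i s) k := by
  have hflip : (insertOppositeTriple i s).getD i false ≠
      (insertOppositeTriple i s).getD (i + 1) false := by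
    rw [getD_insertOppositeTriple_of_le le_rfl hi,
      getD_insertOppositeTriple_of_lt (by omega) (by omega) hi]
    simp
  intro k hk htriple
  obtain hk | rfl | rfl : k + 2 ≤ i ∨ k + 1 = i ∨ k = i := by omega
  · rw [insertOppositeTriple, List.append_assoc, tripleAtL_take_append_iff _ (by omega) hi]
      at htriple
    exact hs k hk htriple
  · exact hflip htriple.2.2
  · exact hflip htriple.2.1

theorem insertOppositeTriple_injOn : Set.InjOn (insertOppositeTriple i) {s | i < s.length} := by
  intro s hs s' hs' h
  rw [← List.take_append_drop_add_length [!s.getD i false, !s.getD i false, !s.getD i false] hs,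
    ← List.take_append_drop_add_length [!s'.getD i false, !s'.getD i false, !s'.getD i false] hs']
  exact congrArg (fun t => t.take (i + 1) ++ t.drop (i + 1 + 3)) h

theorem insertOppositeTriple_take_append_drop {t : List Bool} (ht : TripleAtL t (i + 1))
    (hi : ¬TripleAtL t i) : insertOppositeTriple i (t.take (i + 1) ++ t.drop (i + 4)) = t := by
  have hlt : i + 3 < t.length := ht.1
  have hlen : (t.take (i + 1)).length = i + 1 := by simp; omega
  have hne : t.getD i false ≠ t.getD (i + 1) false := fun h => hi ⟨by omega, h, ht.2.1⟩
  have hletter : (!(t.take (i + 1) ++ t.drop (i + 4)).getD i false) = t.getD (i + 1) false := by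
    rw [List.getD_take_append_of_lt _ false (lt_add_one i) (by omega)]
    exact Bool.not_eq.mpr hne
  rw [insertOppositeTriple, hletter, List.take_left' hlen, List.drop_left' hlen]
  exact ht.eq_take_append_append_drop.symm

end insertOppositeTriple

-- With 0-indexed positions, the paper's first triple at position `j` is `TripleAtL t (j - 1)`.
theorem stmt_3_general (n j : ℕ) (hj : 2 ≤ j) (hjn : j + 2 ≤ n) :
    Set.BijOn
      (fun s : List Bool =>
        s.take (j - 1) ++
          [!s.getD (j - 2) false, !s.getD (j - 2) false, !s.getD (j - 2) false] ++
          s.drop (j - 1))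
      {s : List Bool | s.length = n - 3 ∧ ∀ k, k + 3 < j → ¬ TripleAtL s k}
      {t : List Bool | t.length = n ∧ TripleAtL t (j - 1) ∧
        ∀ k, k < j - 1 → ¬ TripleAtL t k} := by
  obtain ⟨i, rfl⟩ : ∃ i, j = i + 2 := ⟨j - 2, by omega⟩
  show Set.BijOn (insertOppositeTriple i) _ _
  refine ⟨?_, insertOppositeTriple_injOn.mono fun s hs => by
    have := hs.1; show i < s.length; omega, ?_⟩
  · rintro s ⟨hlen, hs⟩
    have hi : i < s.length := by omega
    exact ⟨by rw [length_insertOppositeTriple hi]; omega, tripleAtL_insertOppositeTriple hi,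
      not_tripleAtL_insertOppositeTriple (fun k hk => hs k (by omega)) hi⟩
  · rintro t ⟨hlen, ht, hfirst⟩
    refine ⟨t.take (i + 1) ++ t.drop (i + 4), ⟨by simp; omega, fun k hk => ?_⟩,
      insertOppositeTriple_take_append_drop ht (hfirst i (by omega))⟩
    rw [tripleAtL_take_append_iff _ (by omega) (by omega)]
    exact hfirst k (by omega)

/-- Inserting three copies of the opposite letter after the (1-indexed) position `j-1`
is a bijection from words of length `n-3` with no triple starting at a 1-indexed position
strictly less than `j-2` onto words of length `n` whose first triple starts exactly at
the 1-indexed position `j` (i.e. the 0-indexed position `j-1`). -/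
theorem stmt_3 (n j : ℕ) (hj : 2 ≤ j) (hjn : j + 2 ≤ n) (hn : 4 ≤ n) :
    Set.BijOn
      (fun s : List Bool =>
        s.take (j - 1) ++
          [!s.getD (j - 2) false, !s.getD (j - 2) false, !s.getD (j - 2) false] ++
          s.drop (j - 1))
      {s : List Bool | s.length = n - 3 ∧ ∀ k, k + 3 < j → ¬ TripleAtL s k}
      {t : List Bool | t.length = n ∧ TripleAtL t (j - 1) ∧
        ∀ k, k < j - 1 → ¬ TripleAtL t k} :=
  stmt_3_general n j hj hjn
end

section
/- Let (x_i^{(n)}) for integers i ≤ n be a doubly-indexed family of integers satisfying the recursion x_i^{(n)} = x_n^{(n)} + ∑_{j=i}^{n-1} x_{j-2}^{(n-3)} for all i ≤ n. Then for all i ≤ n, x_i^{(n)} = ∑_{j=0}^{n-i} C(n-i, j) · x_{n-3j}^{(n-3j)}. -/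
private lemma aux_stmt5 (x : ℤ → ℤ → ℤ)
    (hrec : ∀ i n : ℤ, i ≤ n →
      x i n = x n n + ∑ j ∈ Finset.Icc i (n - 1), x (j - 2) (n - 3)) :
    ∀ d : ℕ, ∀ i n : ℤ, i ≤ n → (n - i).toNat = d →
      x i n = ∑ j ∈ Finset.range (d + 1),
        (Nat.choose d j : ℤ) * x (n - 3 * j) (n - 3 * j) := by
  intro d
  induction d using Nat.strong_induction_on with
  | _ d IH =>
    intro i n hin hd
    rcases Nat.eq_zero_or_pos d with h0 | hpos
    · subst h0
      have : i = n := by omega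
      subst this
      simp
    · rw [hrec i n hin]
      have h1 : ∑ j ∈ Finset.Icc i (n - 1), x (j - 2) (n - 3)
          = ∑ m ∈ Finset.range d, x (n - 3 - (m : ℤ)) (n - 3) := by
        refine Finset.sum_nbij' (fun j => (n - 1 - j).toNat) (fun m => n - 1 - (m : ℤ))
          ?_ ?_ ?_ ?_ ?_
        · intro a ha
          simp only [Finset.mem_Icc] at ha
          simp only [Finset.mem_range]
          omega
        · intro a ha
          simp only [Finset.mem_range] at ha
          simp only [Finset.mem_Icc]
          omega
        · intro a ha
          simp only [Finset.mem_Icc] at ha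
          omega
        · intro a ha
          simp only [Finset.mem_range] at ha
          omega
        · intro a ha
          simp only [Finset.mem_Icc] at ha
          congr 1
          omega
      rw [h1]
      have h2 : ∀ m ∈ Finset.range d,
          x (n - 3 - (m : ℤ)) (n - 3)
            = ∑ k ∈ Finset.range (m + 1),
                (Nat.choose m k : ℤ) * x (n - 3 * ((k : ℤ) + 1)) (n - 3 * ((k : ℤ) + 1)) := by
        intro m hm
        simp only [Finset.mem_range] at hm
        have := IH m hm (n - 3 - (m : ℤ)) (n - 3) (by omega) (by omega)
        rw [this]
        refine Finset.sum_congr rfl fun k hk => ?_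
        have : n - 3 - 3 * (k : ℤ) = n - 3 * ((k : ℤ) + 1) := by ring
        rw [this]
      rw [Finset.sum_congr rfl h2]
      have h3 : (∑ m ∈ Finset.range d, ∑ k ∈ Finset.range (m + 1),
            (Nat.choose m k : ℤ) * x (n - 3 * ((k : ℤ) + 1)) (n - 3 * ((k : ℤ) + 1)))
          = ∑ k ∈ Finset.range d, ∑ m ∈ Finset.Ico k d,
            (Nat.choose m k : ℤ) * x (n - 3 * ((k : ℤ) + 1)) (n - 3 * ((k : ℤ) + 1)) := by
        simp only [Finset.range_eq_Ico]
        exact (Finset.sum_Ico_Ico_comm 0 d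
          (fun k m => (Nat.choose m k : ℤ) * x (n - 3 * ((k : ℤ) + 1)) (n - 3 * ((k : ℤ) + 1)))).symm
      rw [h3]
      have h4 : ∀ k ∈ Finset.range d,
          (∑ m ∈ Finset.Ico k d, (Nat.choose m k : ℤ)
              * x (n - 3 * ((k : ℤ) + 1)) (n - 3 * ((k : ℤ) + 1)))
          = (Nat.choose d (k + 1) : ℤ) * x (n - 3 * ((k : ℤ) + 1)) (n - 3 * ((k : ℤ) + 1)) := by
        intro k hk
        simp only [Finset.mem_range] at hk
        rw [← Finset.sum_mul]
        congr 1
        have : Finset.Ico k d = Finset.Icc k (d - 1) := by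
          ext a; simp [Finset.mem_Ico, Finset.mem_Icc]; omega
        rw [this]
        rw [← Nat.cast_sum]
        rw [Nat.sum_Icc_choose]
        congr 2
        omega
      rw [Finset.sum_congr rfl h4]
      rw [Finset.sum_range_succ']
      simp only [Nat.cast_zero, Nat.choose_zero_right, Nat.cast_one, one_mul, mul_zero, sub_zero]
      rw [add_comm]
      push_cast
      rfl

theorem stmt_5 (x : ℤ → ℤ → ℤ)
    (hrec : ∀ i n : ℤ, i ≤ n →
      x i n = x n n + ∑ j ∈ Finset.Icc i (n - 1), x (j - 2) (n - 3)) :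
    ∀ i n : ℤ, i ≤ n →
      x i n = ∑ j ∈ Finset.range ((n - i).toNat + 1),
        (Nat.choose (n - i).toNat j : ℤ) * x (n - 3 * j) (n - 3 * j) := by
  intro i n hin
  exact aux_stmt5 x hrec (n - i).toNat i n hin rfl
end

section
/- Let (x_i^{(n)})_{i ≤ n} be integers satisfying x_i^{(n)} = ∑_{j=0}^{n-i} C(n-i, j) x_{n-3j}^{(n-3j)} for all i ≤ n, and suppose additionally x_2^{(n)} = 0 for all n. Then for all n ≥ 6, x_{12-2n}^{(12-2n)} = -∑_{j=1}^{n-5} C(n-5, j-1) · x_{n-3j}^{(n-3j)}. -/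
/-! Evaluate the recursion at `x_2^{(n-3)} = 0`: its sum runs over `j = 0, …, n - 5`, the top
term `j = n - 5` is `x_{12-2n}^{(12-2n)}`, and shifting `j ↦ j + 1` in the remaining terms gives
the right-hand side. -/

open Finset

lemma Finset.sum_Icc_one_eq_sum_range {M : Type*} [AddCommMonoid M] (f : ℕ → M) (m : ℕ) :
    ∑ j ∈ Icc 1 m, f j = ∑ j ∈ range m, f (j + 1) := by
  rw [range_eq_Ico, sum_Ico_add' f 0 m 1, zero_add, Finset.Ico_add_one_right_eq_Icc]

lemma binomial_relation_of_gap (x : ℤ → ℤ → ℤ)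
    (hbin : ∀ i n : ℤ, i ≤ n →
      x i n = ∑ j ∈ range ((n - i).toNat + 1),
        (Nat.choose (n - i).toNat j : ℤ) * x (n - 3 * j) (n - 3 * j))
    (i : ℤ) (m : ℕ) :
    x i (i + m) = ∑ j ∈ range (m + 1),
      (m.choose j : ℤ) * x (i + m - 3 * j) (i + m - 3 * j) := by
  simpa using hbin i (i + m) (by omega)

theorem stmt_7 (x : ℤ → ℤ → ℤ)
    (hbin : ∀ i n : ℤ, i ≤ n →
      x i n = ∑ j ∈ Finset.range ((n - i).toNat + 1),
        (Nat.choose (n - i).toNat j : ℤ) * x (n - 3 * j) (n - 3 * j))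
    (hx2 : ∀ n : ℤ, 2 ≤ n → x 2 n = 0) :
    ∀ n : ℤ, 6 ≤ n →
      x (12 - 2 * n) (12 - 2 * n) =
        - ∑ j ∈ Finset.Icc 1 (n - 5).toNat,
            (Nat.choose (n - 5).toNat (j - 1) : ℤ) * x (n - 3 * j) (n - 3 * j) := by
  intro n hn
  obtain ⟨m, rfl⟩ : ∃ m : ℕ, n = m + 5 := ⟨(n - 5).toNat, by omega⟩
  have hvanish := (binomial_relation_of_gap x hbin 2 m).symm.trans (hx2 _ (by omega))
  have hlast : (2 : ℤ) + m - 3 * m = 12 - 2 * (m + 5) := by ring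
  have hshift : ∀ j : ℕ, (2 : ℤ) + m - 3 * j = m + 5 - 3 * (j + 1 : ℕ) := fun j => by push_cast; ring
  rw [sum_range_succ, Nat.choose_self, Nat.cast_one, one_mul, hlast] at hvanish
  simp only [hshift] at hvanish
  simp only [add_sub_cancel_right, Int.toNat_natCast, sum_Icc_one_eq_sum_range, add_tsub_cancel_right]
  linear_combination hvanish
end

section
/- Let (x_i^{(n)})_{i ≤ n} satisfy the binomial formula x_i^{(n)} = ∑_{j=0}^{n-i} C(n-i, j) x_{n-3j}^{(n-3j)} for all integers i ≤ n, together with x_3^{(n)} = 2 x_4^{(n)} and x_4^{(n)} = x_5^{(n)} for all n ≥ 5, and suppose S_n := x_1^{(n)} (so S_n = |S^{(n)}| in the paper). Then for n ≥ 6: S_n = x_{n+3}^{(n+3)} + ∑_{i=0}^{n-6} [C(n-5, i+1) + 4·C(n-5, i)]·x_{n-3i}^{(n-3i)} + 4·x_{15-2n}^{(15-2n)}. -/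
/-!
Each binomial expansion obeys Pascal's rule `x i n = x (i+1) n + x (i-2) (n-3)`. Peeling off the
first reduction move with it, (X3) and (X4) give `x 1 n = x 5 (n+3) = x 8 (n+3) + 4 x 5 n`; expanding
`x 8 (n+3)` and `x 5 n` by the binomial formula and splitting off their extreme terms yields the
stated sum.
-/

open Finset

theorem sum_range_choose_succ_mul {R : Type*} [NonAssocSemiring R] (f : ℕ → R) (m : ℕ) :
    ∑ j ∈ range (m + 2), ((m + 1).choose j : R) * f j =
      ∑ j ∈ range (m + 1), (m.choose j : R) * f j +
        ∑ j ∈ range (m + 1), (m.choose j : R) * f (j + 1) := by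
  have hlast : ∑ j ∈ range (m + 1), (m.choose j : R) * f j =
      ∑ j ∈ range (m + 2), (m.choose j : R) * f j := by
    rw [sum_range_succ _ (m + 1), Nat.choose_succ_self, Nat.cast_zero, zero_mul, add_zero]
  rw [hlast, sum_range_succ' _ (m + 1), sum_range_succ' (fun j => (m.choose j : R) * f j) (m + 1)]
  simp only [Nat.choose_succ_succ', Nat.cast_add, add_mul, sum_add_distrib, Nat.choose_zero_right]
  abel

def BinomialFormula (x : ℤ → ℤ → ℤ) : Prop :=
  ∀ i n : ℤ, i ≤ n →
    x i n = ∑ j ∈ range ((n - i).toNat + 1), (Nat.choose (n - i).toNat j : ℤ) * x (n - 3 * j) (n - 3 * j)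

namespace BinomialFormula

variable {x : ℤ → ℤ → ℤ} (hx : BinomialFormula x)
include hx

theorem sub_natCast (n : ℤ) (m : ℕ) :
    x (n - m) n = ∑ j ∈ range (m + 1), (m.choose j : ℤ) * x (n - 3 * j) (n - 3 * j) := by
  simpa using hx (n - m) n (by omega)

theorem sub_natCast_eq_sum_add_last (n : ℤ) (m : ℕ) :
    x (n - m) n =
      ∑ j ∈ range m, (m.choose j : ℤ) * x (n - 3 * j) (n - 3 * j) + x (n - 3 * m) (n - 3 * m) := by
  rw [hx.sub_natCast, sum_range_succ, Nat.choose_self, Nat.cast_one, one_mul]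

theorem sub_natCast_eq_first_add_sum (n : ℤ) (m : ℕ) :
    x (n - m) n =
      x n n + ∑ j ∈ range m, (m.choose (j + 1) : ℤ) * x (n - 3 - 3 * j) (n - 3 - 3 * j) := by
  rw [hx.sub_natCast, sum_range_succ', add_comm]
  congr 1
  · simp
  · refine sum_congr rfl fun j _ => ?_
    push_cast
    ring_nf

theorem pascal {i n : ℤ} (hin : i < n) : x i n = x (i + 1) n + x (i - 2) (n - 3) := by
  obtain ⟨m, rfl⟩ : ∃ m : ℕ, i = n - (m + 1 : ℕ) := ⟨(n - i - 1).toNat, by omega⟩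
  have h₁ : n - ((m + 1 : ℕ) : ℤ) + 1 = n - m := by push_cast; ring
  have h₂ : n - ((m + 1 : ℕ) : ℤ) - 2 = n - 3 - m := by push_cast; ring
  rw [h₁, h₂, hx.sub_natCast, hx.sub_natCast, hx.sub_natCast,
    sum_range_choose_succ_mul (fun j => x (n - 3 * j) (n - 3 * j))]
  congr 1
  refine sum_congr rfl fun j _ => ?_
  push_cast
  ring_nf

variable (hx34 : ∀ n : ℤ, 5 ≤ n → x 3 n = 2 * x 4 n) (hx45 : ∀ n : ℤ, 5 ≤ n → x 4 n = x 5 n)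
include hx34 hx45

theorem one_eq_five_add_three {n : ℤ} (hn : 2 ≤ n) : x 1 n = x 5 (n + 3) := by
  have h3 := hx.pascal (show (3 : ℤ) < n + 3 by omega)
  norm_num at h3
  linarith [hx34 (n + 3) (by omega), hx45 (n + 3) (by omega)]

theorem five_add_three_eq {n : ℤ} (hn : 5 ≤ n) : x 5 (n + 3) = x 8 (n + 3) + 4 * x 5 n := by
  have h5 := hx.pascal (show (5 : ℤ) < n + 3 by omega)
  have h6 := hx.pascal (show (6 : ℤ) < n + 3 by omega)
  have h7 := hx.pascal (show (7 : ℤ) < n + 3 by omega)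
  norm_num at h5 h6 h7
  linarith [hx34 n hn, hx45 n hn]

end BinomialFormula

theorem stmt_15 (x : ℤ → ℤ → ℤ)
    (hbin : ∀ i n : ℤ, i ≤ n →
      x i n = ∑ j ∈ Finset.range ((n - i).toNat + 1),
        (Nat.choose (n - i).toNat j : ℤ) * x (n - 3 * j) (n - 3 * j))
    (hx34 : ∀ n : ℤ, 5 ≤ n → x 3 n = 2 * x 4 n)
    (hx45 : ∀ n : ℤ, 5 ≤ n → x 4 n = x 5 n) :
    ∀ n : ℕ, 6 ≤ n →
      x 1 n =
        x ((n : ℤ) + 3) ((n : ℤ) + 3) +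
          (∑ i ∈ Finset.range (n - 5),
            ((Nat.choose (n - 5) (i + 1) : ℤ) + 4 * (Nat.choose (n - 5) i : ℤ)) *
              x ((n : ℤ) - 3 * i) ((n : ℤ) - 3 * i)) +
          4 * x (15 - 2 * (n : ℤ)) (15 - 2 * (n : ℤ)) := by
  intro n hn
  have hx : BinomialFormula x := hbin
  have hm : ((n - 5 : ℕ) : ℤ) = n - 5 := by omega
  have h8 : x 8 (n + 3) = x (n + 3) (n + 3) +
      ∑ j ∈ range (n - 5), ((n - 5).choose (j + 1) : ℤ) * x (n - 3 * j) (n - 3 * j) := by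
    convert hx.sub_natCast_eq_first_add_sum (n + 3) (n - 5) using 3 <;> push_cast [hm] <;> ring_nf
  have h5 : x 5 n = ∑ j ∈ range (n - 5), ((n - 5).choose j : ℤ) * x (n - 3 * j) (n - 3 * j) +
      x (15 - 2 * n) (15 - 2 * n) := by
    convert hx.sub_natCast_eq_sum_add_last n (n - 5) using 3 <;> push_cast [hm] <;> ring_nf
  rw [hx.one_eq_five_add_three hx34 hx45 (by omega), hx.five_add_three_eq hx34 hx45 (by omega), h8,
    h5]
  simp only [add_mul, sum_add_distrib, mul_assoc, ← mul_sum]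
  ring
end
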